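/- Let a be a sesquilinear form on complex Hilbert space V, bounded by C_a, let u_h, u_H, z_H ∈ V and let C_m, C_∞ be linear operators such that: (i) Galerkin orthogonality a(u_h − u_H, (1 − C_m)z_H) = 0; (ii) a(u_h − I_H u_h, (1 − C_∞)z_H) = 0; (iii) I_H(u_h − u_H) =: e_H satisfies a(e_H, (1−C_∞)z_H) = ‖e_H‖² (dual problem); (iv) |a(v, (C_∞ − C_m)z_H)| ≤ δ‖v‖·‖e_H‖ for all relevant v with δ ≤ 1/2 when v = e_H, and |a(u_h − I_H u_h, (C_∞−C_m)z_H)| ≤ δ'‖u_h − I_H u_h‖·‖e_H‖. Then ‖e_H‖ ≤ 2δ'‖u_h − I_H u_h‖, and consequently ‖u_h − u_H‖ ≤ (1 + 2δ')‖(1 − I_H)u_h‖. -/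
import Mathlib


/-- Abstract form of the quasi-optimality duality argument: with Galerkin
orthogonality, the ideal orthogonality, the dual-problem identity and the two
exponentially small localization bounds (`δ ≤ 1/2`, `δ'`), one gets
`‖e_H‖ ≤ 2δ'‖u_h - I_H u_h‖` and `‖u_h - u_H‖ ≤ (1 + 2δ')‖(1 - I_H)u_h‖`,
where `e_H = I_H u_h - u_H`. -/
theorem stmt17 {V : Type*} [NormedAddCommGroup V] [InnerProductSpace ℂ V]
    (a : V →ₗ[ℂ] V →ₛₗ[starRingEnd ℂ] ℂ)
    (C_a : ℝ) (hbdd : ∀ v w : V, ‖a v w‖ ≤ C_a * ‖v‖ * ‖w‖)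
    (IH Cinf Cm : V →ₗ[ℂ] V)
    (uh uH zH : V) (hIHuH : IH uH = uH)
    (δ δ' : ℝ) (hδ : δ ≤ 1 / 2) (hδ' : 0 ≤ δ')
    (h1 : a (uh - uH) (zH - Cm zH) = 0)
    (h2 : a (uh - IH uh) (zH - Cinf zH) = 0)
    (h3 : a (IH uh - uH) (zH - Cinf zH) = ((‖IH uh - uH‖ ^ 2 : ℝ) : ℂ))
    (h4 : ‖a (IH uh - uH) (Cinf zH - Cm zH)‖ ≤ δ * ‖IH uh - uH‖ ^ 2)
    (h5 : ‖a (uh - IH uh) (Cinf zH - Cm zH)‖ ≤ δ' * ‖uh - IH uh‖ * ‖IH uh - uH‖) :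
    ‖IH uh - uH‖ ≤ 2 * δ' * ‖uh - IH uh‖ ∧
      ‖uh - uH‖ ≤ (1 + 2 * δ') * ‖uh - IH uh‖ := by
  set e := IH uh - uH with he
  have key : ((‖e‖ ^ 2 : ℝ) : ℂ)
      = -(a (uh - IH uh) (Cinf zH - Cm zH)) - a e (Cinf zH - Cm zH) := by
    rw [← h3]
    have e1 : (IH uh - uH : V) = (uh - uH) - (uh - IH uh) := by abel
    simp only [he, e1, map_sub, LinearMap.sub_apply] at h1 h2 ⊢
    linear_combination h1 - h2
  have hnn : (0:ℝ) ≤ ‖e‖ := norm_nonneg _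
  have hb : ‖e‖ ^ 2 ≤ δ' * ‖uh - IH uh‖ * ‖e‖ + δ * ‖e‖ ^ 2 := by
    have : ‖((‖e‖ ^ 2 : ℝ) : ℂ)‖ = ‖e‖ ^ 2 := by
      simp [Complex.norm_real, abs_of_nonneg (sq_nonneg ‖e‖)]
    calc ‖e‖ ^ 2 = ‖((‖e‖ ^ 2 : ℝ) : ℂ)‖ := this.symm
      _ ≤ ‖a (uh - IH uh) (Cinf zH - Cm zH)‖ + ‖a e (Cinf zH - Cm zH)‖ := by
          rw [key]; exact (norm_sub_le _ _).trans (by rw [norm_neg])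
      _ ≤ δ' * ‖uh - IH uh‖ * ‖e‖ + δ * ‖e‖ ^ 2 := add_le_add h5 h4
  have first : ‖e‖ ≤ 2 * δ' * ‖uh - IH uh‖ := by
    rcases eq_or_lt_of_le hnn with h0 | h0
    · rw [← h0]; positivity
    · nlinarith
  refine ⟨first, ?_⟩
  have : (uh - uH : V) = (uh - IH uh) + e := by rw [he]; abel
  calc ‖uh - uH‖ = ‖(uh - IH uh) + e‖ := by rw [this]
    _ ≤ ‖uh - IH uh‖ + ‖e‖ := norm_add_le _ _
    _ ≤ ‖uh - IH uh‖ + 2 * δ' * ‖uh - IH uh‖ := by linarith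
    _ = (1 + 2 * δ') * ‖uh - IH uh‖ := by ring
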